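/- arXiv:math-ph/0207004 — 4 statements merged into one kernel-verified Lean document; each statement's English description precedes it below -/
import Mathlib

section
/- Define d_j(z,s₁,s₂) = s₁s₂(q-q^{-1})²/z + z/(q-q^{-1})² + s₁q^{2j} + s₂q^{-2j}. Let a_j = -s₀s₁(1-q²)/(zq²) - s₀q^{2(1-j)}/(1-q²). Then a_j satisfies: (i) a_j + s₀q^{2(1-j)} = a_{j-1}; and (ii) a_j·d_j(z,s₁,s₂) = a_{j+1}·κ_j where κ_j = a_j·q^{2j}·s₀^{-1}·z + d_{j-1}(z,s₁,s₂); and moreover κ_j = d_j(zq², s₁, q²s₂) for all j ∈ ℤ. -/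
/-- The structure function `d_j(z,s₁,s₂)` of the module `M(z,s)`. -/
noncomputable def dfun (q z s1 s2 : ℂ) (j : ℤ) : ℂ :=
  s1 * s2 * (q - q⁻¹) ^ 2 / z + z / (q - q⁻¹) ^ 2
    + s1 * q ^ (2 * j) + s2 * q ^ (-(2 * j))

/-- The coefficient `a_j` in the proof of Proposition 2.2(a). -/
noncomputable def afun (q z s0 s1 : ℂ) (j : ℤ) : ℂ :=
  -(s0 * s1 * (1 - q ^ 2)) / (z * q ^ 2)
    - s0 * q ^ (2 * (1 - j)) / (1 - q ^ 2)

/-- The coefficient `κ_j` in the proof of Proposition 2.2(a). -/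
noncomputable def kfun (q z s0 s1 s2 : ℂ) (j : ℤ) : ℂ :=
  afun q z s0 s1 j * q ^ (2 * j) * s0⁻¹ * z + dfun q z s1 s2 (j - 1)

/-! With `t = q ^ (2 * j)` and `w = 1 - q²`, both coefficients factor:
`d_j(z, s₁, s₂) = (s₁w²t + q²z)(s₂w² + q²zt) / (q²zw²t)` and
`a_j = -s₀(s₁w²t + q⁴z) / (zq²wt)`. Hence `a_j d_j(z, s₁, s₂)` and
`a_{j+1} d_j(zq², s₁, q²s₂)` are, up to the same scalar, the product of the same three
factors `s₁w²t + q⁴z`, `s₁w²t + q²z` and `s₂w² + q²zt`. -/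

section

variable {G₀ : Type*} [GroupWithZero G₀] {q : G₀}

lemma zpow_two_mul_add_one (hq : q ≠ 0) (j : ℤ) : q ^ (2 * (j + 1)) = q ^ (2 * j) * q ^ 2 := by
  rw [mul_add, mul_one, zpow_add₀ hq]; norm_cast

lemma zpow_two_mul_sub_one (hq : q ≠ 0) (j : ℤ) : q ^ (2 * (j - 1)) = q ^ (2 * j) / q ^ 2 := by
  rw [mul_sub, mul_one, zpow_sub₀ hq]; norm_cast

lemma zpow_two_mul_one_sub (hq : q ≠ 0) (j : ℤ) : q ^ (2 * (1 - j)) = q ^ 2 / q ^ (2 * j) := by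
  rw [mul_sub, mul_one, zpow_sub₀ hq]; norm_cast

end

lemma sub_inv_sq_eq_one_sub_sq_div {K : Type*} [Field K] {q : K} (hq : q ≠ 0) :
    (q - q⁻¹) ^ 2 = (1 - q ^ 2) ^ 2 / q ^ 2 := by
  field_simp; ring

section

variable {q z : ℂ} (s0 s1 s2 : ℂ)

lemma afun_eq_div (hq : q ≠ 0) (hq2 : q ^ 2 ≠ 1) (hz : z ≠ 0) (j : ℤ) :
    afun q z s0 s1 j = -s0 * (s1 * (1 - q ^ 2) ^ 2 * q ^ (2 * j) + q ^ 4 * z)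
      / (z * q ^ 2 * (1 - q ^ 2) * q ^ (2 * j)) := by
  rw [afun, zpow_two_mul_one_sub hq]
  field_simp
  ring

lemma dfun_eq_mul_div (hq : q ≠ 0) (hq2 : q ^ 2 ≠ 1) (hz : z ≠ 0) (j : ℤ) :
    dfun q z s1 s2 j = (s1 * (1 - q ^ 2) ^ 2 * q ^ (2 * j) + q ^ 2 * z)
      * (s2 * (1 - q ^ 2) ^ 2 + q ^ 2 * z * q ^ (2 * j))
      / (q ^ 2 * z * (1 - q ^ 2) ^ 2 * q ^ (2 * j)) := by
  rw [dfun, sub_inv_sq_eq_one_sub_sq_div hq, zpow_neg]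
  field_simp
  ring

lemma afun_add_eq_afun_sub_one (hq : q ≠ 0) (hq2 : q ^ 2 ≠ 1) (hz : z ≠ 0) (j : ℤ) :
    afun q z s0 s1 j + s0 * q ^ (2 * (1 - j)) = afun q z s0 s1 (j - 1) := by
  rw [afun_eq_div s0 s1 hq hq2 hz, afun_eq_div s0 s1 hq hq2 hz, zpow_two_mul_one_sub hq,
    zpow_two_mul_sub_one hq]
  field_simp
  ring

lemma kfun_eq_dfun (hq : q ≠ 0) (hq2 : q ^ 2 ≠ 1) (hz : z ≠ 0) (hs0 : s0 ≠ 0) (j : ℤ) :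
    kfun q z s0 s1 s2 j = dfun q (z * q ^ 2) s1 (q ^ 2 * s2) j := by
  rw [kfun, afun_eq_div s0 s1 hq hq2 hz, dfun_eq_mul_div s1 s2 hq hq2 hz,
    dfun_eq_mul_div s1 _ hq hq2 (mul_ne_zero hz (pow_ne_zero 2 hq)), zpow_two_mul_sub_one hq]
  field_simp
  ring

lemma afun_mul_dfun_eq (hq : q ≠ 0) (hq2 : q ^ 2 ≠ 1) (hz : z ≠ 0) (j : ℤ) :
    afun q z s0 s1 j * dfun q z s1 s2 j
      = afun q z s0 s1 (j + 1) * dfun q (z * q ^ 2) s1 (q ^ 2 * s2) j := by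
  rw [afun_eq_div s0 s1 hq hq2 hz, afun_eq_div s0 s1 hq hq2 hz, dfun_eq_mul_div s1 s2 hq hq2 hz,
    dfun_eq_mul_div s1 _ hq hq2 (mul_ne_zero hz (pow_ne_zero 2 hq)), zpow_two_mul_add_one hq]
  field_simp

end

/-- the consistency equations determining the submodule
`M(zq², s⁺) ⊂ M(z,s) ⊗ V_z^{(1)}`, with `s⁺ = (qs₀, s₁, q²s₂)`. -/
theorem submodule_consistency_equations (q z s0 s1 s2 : ℂ)
    (hq : q ≠ 0) (hq2 : q ^ 2 ≠ 1) (hz : z ≠ 0) (hs0 : s0 ≠ 0) :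
    (∀ j : ℤ, afun q z s0 s1 j + s0 * q ^ (2 * (1 - j)) = afun q z s0 s1 (j - 1)) ∧
    (∀ j : ℤ, afun q z s0 s1 j * dfun q z s1 s2 j
        = afun q z s0 s1 (j + 1) * kfun q z s0 s1 s2 j) ∧
    (∀ j : ℤ, kfun q z s0 s1 s2 j = dfun q (z * q ^ 2) s1 (q ^ 2 * s2) j) := by
  refine ⟨afun_add_eq_afun_sub_one s0 s1 hq hq2 hz, fun j => ?_,
    kfun_eq_dfun s0 s1 s2 hq hq2 hz hs0⟩
  rw [kfun_eq_dfun s0 s1 s2 hq hq2 hz hs0]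
  exact afun_mul_dfun_eq s0 s1 s2 hq hq2 hz j
end

section
/- For vectors α, β ∈ ℤ^N define α ∧ β = Σ_{k=1}^{N} Σ_{j=1}^{k-1} (α_j β_k - α_k β_j). For 1 ≤ i < j ≤ N let P_{ij} be the transposition swapping coordinates i and j. If α, β ∈ ℤ^N satisfy α_l = (Pα)_l and β_l = (Pβ)_l for all i ≤ l ≤ j (where P is any permutation of coordinates), then (α - Pα) ∧ (β - P_{ij}β) + (α - P_{ij}α) ∧ (β - Pβ) = 0. -/
/-! `α - P_{ij} α` is supported on `{i, j}` with opposite entries there, and `α - P α` vanishes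
on `[i, j]`. Expanding `γ ∧ δ = Σ_k δ_k (Σ_{a<k} γ_a - Σ_{a>k} γ_a)`, a `δ` of the first kind only
sees the difference of these partial sums of `γ` at `i` and at `j`, which is a sum of values of
`γ` on `[i, j]`. So both wedges in the theorem vanish separately. -/

/-- The antisymmetric pairing `α ∧ β = Σ_{j<k}(α_j β_k − α_k β_j)`. -/
def wedge {N : ℕ} (α β : Fin N → ℤ) : ℤ :=
  ∑ k : Fin N, ∑ j ∈ Finset.Iio k, (α j * β k - α k * β j)

/-- The action of a permutation on vectors by permuting coordinates. -/
def permAct {N : ℕ} (P : Equiv.Perm (Fin N)) (α : Fin N → ℤ) : Fin N → ℤ :=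
  α ∘ ⇑P⁻¹

open Finset

variable {N : ℕ}

lemma wedge_antisymm (α β : Fin N → ℤ) : wedge α β = -wedge β α := by
  simp only [wedge, ← sum_neg_distrib, neg_sub, mul_comm]

lemma wedge_eq_sum_mul (γ δ : Fin N → ℤ) :
    wedge γ δ = ∑ k, δ k * ((∑ a ∈ Iio k, γ a) - ∑ a ∈ Ioi k, γ a) := by
  simp only [wedge, sum_sub_distrib, mul_sub, mul_sum]
  congr 1
  · exact sum_congr rfl fun k _ => sum_congr rfl fun a _ => mul_comm _ _
  · rw [sum_comm' (t' := univ) (s' := fun a => Ioi a) (fun k a => by simp)]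
    exact sum_congr rfl fun a _ => sum_congr rfl fun k _ => mul_comm _ _

lemma wedge_eq_zero_of_supported_pair {i j : Fin N} (hij : i < j) {γ δ : Fin N → ℤ}
    (hγ : ∀ l, i ≤ l → l ≤ j → γ l = 0) (hδ : ∀ l, l ≠ i → l ≠ j → δ l = 0)
    (hδij : δ i + δ j = 0) : wedge γ δ = 0 := by
  have hIio : ∑ a ∈ Iio i, γ a = ∑ a ∈ Iio j, γ a :=
    sum_subset (Iio_subset_Iio hij.le) fun l hl hl' =>
      hγ l (not_lt.mp (mem_Iio.not.mp hl')) (mem_Iio.mp hl).le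
  have hIoi : ∑ a ∈ Ioi j, γ a = ∑ a ∈ Ioi i, γ a :=
    sum_subset (Ioi_subset_Ioi hij.le) fun l hl hl' =>
      hγ l (mem_Ioi.mp hl).le (not_lt.mp (mem_Ioi.not.mp hl'))
  rw [wedge_eq_sum_mul, ← sum_subset (subset_univ {i, j}) fun l _ hl => by
    simp only [mem_insert, mem_singleton, not_or] at hl
    rw [hδ l hl.1 hl.2, zero_mul]]
  rw [sum_pair hij.ne, hIio, hIoi, eq_neg_of_add_eq_zero_right hδij]
  ring

section swap

variable {i j : Fin N} (α : Fin N → ℤ)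

lemma sub_permAct_swap_apply_of_ne {l : Fin N} (hi : l ≠ i) (hj : l ≠ j) :
    (α - permAct (Equiv.swap i j) α) l = 0 := by
  simp [permAct, Equiv.swap_apply_of_ne_of_ne hi hj]

lemma sub_permAct_swap_apply_add_apply :
    (α - permAct (Equiv.swap i j) α) i + (α - permAct (Equiv.swap i j) α) j = 0 := by
  simp [permAct]

end swap

/-- the inductive step (B.8) in Appendix B. If `α` and `β` are
fixed by `P` on the interval `[i,j]`, then the mixed wedge terms cancel. -/
theorem wedge_inductive_step {N : ℕ} (i j : Fin N) (hij : i < j)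
    (P : Equiv.Perm (Fin N)) (α β : Fin N → ℤ)
    (hα : ∀ l : Fin N, i ≤ l → l ≤ j → α l = permAct P α l)
    (hβ : ∀ l : Fin N, i ≤ l → l ≤ j → β l = permAct P β l) :
    wedge (α - permAct P α) (β - permAct (Equiv.swap i j) β)
      + wedge (α - permAct (Equiv.swap i j) α) (β - permAct P β) = 0 := by
  have h₁ : wedge (α - permAct P α) (β - permAct (Equiv.swap i j) β) = 0 :=
    wedge_eq_zero_of_supported_pair hij (fun l hil hlj => sub_eq_zero.mpr (hα l hil hlj))
      (fun _ => sub_permAct_swap_apply_of_ne β) (sub_permAct_swap_apply_add_apply β)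
  have h₂ : wedge (β - permAct P β) (α - permAct (Equiv.swap i j) α) = 0 :=
    wedge_eq_zero_of_supported_pair hij (fun l hil hlj => sub_eq_zero.mpr (hβ l hil hlj))
      (fun _ => sub_permAct_swap_apply_of_ne α) (sub_permAct_swap_apply_add_apply α)
  rw [h₁, wedge_antisymm, h₂, neg_zero, add_zero]
end

section
/- Let η, v, v' ∈ ℂ, and for α, β ∈ {−1,+1}^N define Q(v)_α^β = exp( (i η/2)·(α ∧ β) + (i v/2)·(α·β) ), where α·β = Σ_j α_jβ_j and α ∧ β = Σ_{j<k}(α_jβ_k − α_kβ_j). Then for any fixed n, the matrices Q(v) and Q(v') restricted to the block {α : Σ_j α_j = n} commute: Σ_β Q(v)_α^β Q(v')_β^γ = Σ_β Q(v')_α^β Q(v)_β^γ, where the sum runs over β with Σ_j β_j = n. -/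
open Complex

/-- The dot product `α·β = Σ_j α_j β_j`. -/
def dotp {N : ℕ} (α β : Fin N → ℤ) : ℤ := ∑ i, α i * β i

/-- Encode a `±1`-sequence by a Boolean sequence. -/
def toSgn {N : ℕ} (b : Fin N → Bool) : Fin N → ℤ := fun i => if b i then 1 else -1

/-- The charge-`n` block of `±1`-sequences. -/
def blockF (N : ℕ) (n : ℤ) : Finset (Fin N → Bool) :=
  Finset.univ.filter fun b => (∑ i, toSgn b i) = n

/-- Baxter's explicit Q-matrix entry `Q(v)_α^β = exp((iη/2)(α∧β) + (iv/2)(α·β))`. -/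
noncomputable def Qbax {N : ℕ} (η v : ℂ) (a b : Fin N → Bool) : ℂ :=
  Complex.exp (Complex.I * η / 2 * ((wedge (toSgn a) (toSgn b) : ℤ) : ℂ)
    + Complex.I * v / 2 * ((dotp (toSgn a) (toSgn b) : ℤ) : ℂ))

namespace QbaxAux

/-- Partial sum of `h` below `m`. -/
def Dp {N : ℕ} (h : Fin N → ℤ) (m : Fin N) : ℤ := ∑ j ∈ Finset.Iio m, h j

lemma adj_pair : ∀ (d : ℕ) {N : ℕ} (h : Fin N → ℤ),
    (∀ m, h m = 0 ∨ h m = 1 ∨ h m = -1) →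
    ∀ (p q : Fin N), p < q → h q = -h p → h p ≠ 0 → q.val - p.val ≤ d →
    ∃ j k : Fin N, j < k ∧ h j ≠ 0 ∧ h k = -h j ∧ ∀ i, j < i → i < k → h i = 0 := by
  intro d
  induction d with
  | zero =>
      intro N h hval p q hpq hq hp hle
      have h1 : p.val < q.val := hpq
      omega
  | succ d ih =>
      intro N h hval p q hpq hq hp hle
      by_cases hz : ∀ i, p < i → i < q → h i = 0
      · exact ⟨p, q, hpq, hp, hq, hz⟩
      · push_neg at hz
        obtain ⟨r, hpr, hrq, hr⟩ := hz
        by_cases hsgn : h r = -h p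
        · have hle' : r.val - p.val ≤ d := by
            have h1 : p.val < r.val := hpr
            have h2 : r.val < q.val := hrq
            omega
          exact ih h hval p r hpr hsgn hp hle'
        · have hrp : h r = h p := by
            rcases hval p with h1 | h1 | h1 <;> rcases hval r with h2 | h2 | h2 <;> omega
          have hq' : h q = -h r := by rw [hq, hrp]
          have hle' : q.val - r.val ≤ d := by
            have h1 : p.val < r.val := hpr
            omega
          exact ih h hval r q hrq hq' hr hle'

lemma sigma_exists : ∀ (t : ℕ) {N : ℕ} (h : Fin N → ℤ),
    (∀ m, h m = 0 ∨ h m = 1 ∨ h m = -1) → (∑ m, h m) = 0 →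
    (Finset.univ.filter (fun m => h m ≠ 0)).card ≤ t →
    ∃ σ : Equiv.Perm (Fin N), (∀ m, σ (σ m) = m) ∧ (∀ m, h (σ m) = -h m) ∧
      (∀ m, h m = 0 → σ m = m) ∧ (∀ m, Dp h (σ m) = Dp h m + h m) := by
  intro t
  induction t with
  | zero =>
      intro N h hval hsum hcard
      have hz : ∀ m, h m = 0 := by
        intro m
        by_contra hm
        have hmem : m ∈ Finset.univ.filter (fun m => h m ≠ 0) := by simp [hm]
        have := Finset.card_pos.mpr ⟨m, hmem⟩
        omega
      exact ⟨Equiv.refl _, fun m => rfl, fun m => by simp [hz m], fun m _ => rfl,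
        fun m => by simp [hz m]⟩
  | succ t ih =>
      intro N h hval hsum hcard
      by_cases htriv : ∀ m, h m = 0
      · exact ⟨Equiv.refl _, fun m => rfl, fun m => by simp [htriv m], fun m _ => rfl,
          fun m => by simp [htriv m]⟩
      push_neg at htriv
      obtain ⟨p, hp⟩ := htriv
      have hq : ∃ q, h q = -h p := by
        by_contra hnq
        push_neg at hnq
        have hpq : ∀ m ∈ Finset.univ.filter (fun m => h m ≠ 0), h m = h p := by
          intro m hm
          simp only [Finset.mem_filter, Finset.mem_univ, true_and] at hm
          have := hnq m
          rcases hval p with h1 | h1 | h1 <;> rcases hval m with h2 | h2 | h2 <;> omega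
        have hsum' : ((Finset.univ.filter (fun m => h m ≠ 0)).card : ℤ) * h p = 0 := by
          have e := Finset.sum_filter_ne_zero (f := h) Finset.univ
          rw [Finset.sum_congr rfl hpq, Finset.sum_const, nsmul_eq_mul] at e
          exact e.trans hsum
        have hmem : p ∈ Finset.univ.filter (fun m => h m ≠ 0) := by simp [hp]
        have hpos := Finset.card_pos.mpr ⟨p, hmem⟩
        rcases hval p with h1 | h1 | h1
        · exact hp h1
        · rw [h1, mul_one] at hsum'; omega
        · rw [h1, mul_neg_one, neg_eq_zero] at hsum'; omega
      obtain ⟨q, hq⟩ := hq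
      have hpq_ne : p ≠ q := by
        intro e; rw [← e] at hq; omega
      obtain ⟨j0, k0, hjk0, hj0, hk0⟩ : ∃ j0 k0 : Fin N, j0 < k0 ∧ h j0 ≠ 0 ∧ h k0 = -h j0 := by
        rcases lt_or_gt_of_ne hpq_ne with hlt | hgt
        · exact ⟨p, q, hlt, hp, hq⟩
        · exact ⟨q, p, hgt, by omega, by omega⟩
      obtain ⟨j, k, hjk, hj, hk, hbetween⟩ :=
        adj_pair N h hval j0 k0 hjk0 hk0 hj0 (by have := k0.isLt; omega)
      have hjne : j ≠ k := ne_of_lt hjk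
      have hk_ne : h k ≠ 0 := by omega
      classical
      set h' : Fin N → ℤ := Function.update (Function.update h j 0) k 0 with hh'
      have h'k : h' k = 0 := by rw [hh', Function.update_self]
      have h'j : h' j = 0 := by rw [hh', Function.update_of_ne hjne, Function.update_self]
      have h'other : ∀ m, m ≠ j → m ≠ k → h' m = h m := by
        intro m hmj hmk
        rw [hh', Function.update_of_ne hmk, Function.update_of_ne hmj]
      have values' : ∀ m, h' m = 0 ∨ h' m = 1 ∨ h' m = -1 := by
        intro m
        by_cases hmj : m = j
        · subst hmj; rw [h'j]; left; rfl
        by_cases hmk : m = k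
        · subst hmk; rw [h'k]; left; rfl
        rw [h'other m hmj hmk]; exact hval m
      have hsum' : ∑ m, h' m = 0 := by
        have e1 : ∑ m, h' m = 0 + ∑ m ∈ Finset.univ \ {k}, Function.update h j 0 m := by
          rw [hh']; exact Finset.sum_update_of_mem (Finset.mem_univ k) _ _
        have hjmem : j ∈ Finset.univ \ {k} := by simp [hjne]
        have e2 : ∑ m ∈ Finset.univ \ {k}, Function.update h j 0 m
            = 0 + ∑ m ∈ (Finset.univ \ {k}) \ {j}, h m := Finset.sum_update_of_mem hjmem _ _
        have e3 : ∑ m, h m = ∑ m ∈ Finset.univ \ {k}, h m + h k :=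
          Finset.sum_eq_sum_sdiff_singleton_add (Finset.mem_univ k) h
        have e4 : ∑ m ∈ Finset.univ \ {k}, h m = ∑ m ∈ (Finset.univ \ {k}) \ {j}, h m + h j :=
          Finset.sum_eq_sum_sdiff_singleton_add hjmem h
        omega
      have hcard' : (Finset.univ.filter (fun m => h' m ≠ 0)).card ≤ t := by
        have hsupp : Finset.univ.filter (fun m => h' m ≠ 0)
            = (Finset.univ.filter (fun m => h m ≠ 0)) \ {j, k} := by
          ext m
          simp only [Finset.mem_filter, Finset.mem_univ, true_and, Finset.mem_sdiff,
            Finset.mem_insert, Finset.mem_singleton]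
          constructor
          · intro hm
            have hmj : m ≠ j := by rintro rfl; exact hm h'j
            have hmk : m ≠ k := by rintro rfl; exact hm h'k
            rw [h'other m hmj hmk] at hm
            exact ⟨hm, by tauto⟩
          · rintro ⟨hm, hnot⟩
            push_neg at hnot
            rw [h'other m hnot.1 hnot.2]
            exact hm
        have hsub : ({j, k} : Finset (Fin N)) ⊆ Finset.univ.filter (fun m => h m ≠ 0) := by
          intro m hm
          simp only [Finset.mem_insert, Finset.mem_singleton] at hm
          rcases hm with rfl | rfl <;> simp [hj, hk_ne]
        rw [hsupp, Finset.card_sdiff_of_subset hsub, Finset.card_pair hjne]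
        omega
      obtain ⟨σ', hinv', hneg', hfix', hDp'⟩ := ih h' values' hsum' hcard'
      have hσ'j : σ' j = j := hfix' j h'j
      have hσ'k : σ' k = k := hfix' k h'k
      have hmoves : ∀ m, h' m ≠ 0 → (m < j ∨ k < m) := by
        intro m hm
        have hmj : m ≠ j := by rintro rfl; exact hm h'j
        have hmk : m ≠ k := by rintro rfl; exact hm h'k
        rcases lt_trichotomy m j with h1 | h1 | h1
        · exact Or.inl h1
        · exact absurd h1 hmj
        rcases lt_trichotomy m k with h2 | h2 | h2
        · exfalso; apply hm; rw [h'other m hmj hmk]; exact hbetween m h1 h2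
        · exact absurd h2 hmk
        · exact Or.inr h2
      have hσ'ne : ∀ m, h' m ≠ 0 → σ' m ≠ j ∧ σ' m ≠ k := by
        intro m hm
        have hne : h' (σ' m) ≠ 0 := by rw [hneg' m]; omega
        constructor
        · rintro e; rw [e, h'j] at hne; exact hne rfl
        · rintro e; rw [e, h'k] at hne; exact hne rfl
      have hDpout : ∀ m : Fin N, (m < j ∨ k < m) → Dp h' m = Dp h m := by
        intro m hm
        unfold Dp
        rcases hm with hm | hm
        · apply Finset.sum_congr rfl
          intro i hi
          have hi' : i < m := Finset.mem_Iio.mp hi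
          exact h'other i (ne_of_lt (lt_trans hi' hm)) (ne_of_lt (lt_trans (lt_trans hi' hm) hjk))
        · have hkmem : k ∈ Finset.Iio m := Finset.mem_Iio.mpr hm
          have hjmem : j ∈ Finset.Iio m \ {k} := by
            simp only [Finset.mem_sdiff, Finset.mem_Iio, Finset.mem_singleton]
            exact ⟨lt_trans hjk hm, hjne⟩
          have c1 : ∑ i ∈ (Finset.Iio m \ {k}) \ {j}, h' i
              = ∑ i ∈ (Finset.Iio m \ {k}) \ {j}, h i := by
            apply Finset.sum_congr rfl
            intro i hi
            simp only [Finset.mem_sdiff, Finset.mem_singleton] at hi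
            exact h'other i hi.2 hi.1.2
          have e1 : ∑ i ∈ Finset.Iio m, h' i = ∑ i ∈ (Finset.Iio m \ {k}) \ {j}, h' i + h' j + h' k := by
            rw [Finset.sum_eq_sum_sdiff_singleton_add hkmem h',
              Finset.sum_eq_sum_sdiff_singleton_add hjmem h']
          have e2 : ∑ i ∈ Finset.Iio m, h i = ∑ i ∈ (Finset.Iio m \ {k}) \ {j}, h i + h j + h k := by
            rw [Finset.sum_eq_sum_sdiff_singleton_add hkmem h,
              Finset.sum_eq_sum_sdiff_singleton_add hjmem h]
          omega
      have hDpk : Dp h k = Dp h j + h j := by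
        have hsub : Finset.Iio j ⊆ Finset.Iio k := fun i hi =>
          Finset.mem_Iio.mpr (lt_trans (Finset.mem_Iio.mp hi) hjk)
        have hsd := Finset.sum_sdiff (f := h) hsub
        have hjmem : j ∈ Finset.Iio k \ Finset.Iio j := by
          simp only [Finset.mem_sdiff, Finset.mem_Iio]
          exact ⟨hjk, lt_irrefl j⟩
        have hone : ∑ i ∈ Finset.Iio k \ Finset.Iio j, h i = h j := by
          apply Finset.sum_eq_single_of_mem j hjmem
          intro i hi hij
          simp only [Finset.mem_sdiff, Finset.mem_Iio, not_lt] at hi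
          exact hbetween i (lt_of_le_of_ne hi.2 (Ne.symm hij)) hi.1
        unfold Dp
        omega
      refine ⟨(Equiv.swap j k).trans σ', ?_, ?_, ?_, ?_⟩
      · intro m
        by_cases hmj : m = j
        · subst hmj
          simp only [Equiv.trans_apply, Equiv.swap_apply_left, hσ'k, Equiv.swap_apply_right, hσ'j]
        by_cases hmk : m = k
        · subst hmk
          simp only [Equiv.trans_apply, Equiv.swap_apply_right, hσ'j, Equiv.swap_apply_left, hσ'k]
        by_cases hm : h' m = 0
        · simp only [Equiv.trans_apply, Equiv.swap_apply_of_ne_of_ne hmj hmk, hfix' m hm]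
        · obtain ⟨e1, e2⟩ := hσ'ne m hm
          simp only [Equiv.trans_apply, Equiv.swap_apply_of_ne_of_ne hmj hmk]
          rw [Equiv.swap_apply_of_ne_of_ne e1 e2, hinv' m]
      · intro m
        by_cases hmj : m = j
        · subst hmj
          simp only [Equiv.trans_apply, Equiv.swap_apply_left, hσ'k]
          exact hk
        by_cases hmk : m = k
        · subst hmk
          simp only [Equiv.trans_apply, Equiv.swap_apply_right, hσ'j]
          omega
        simp only [Equiv.trans_apply, Equiv.swap_apply_of_ne_of_ne hmj hmk]
        by_cases hm : h' m = 0
        · rw [hfix' m hm]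
          have : h m = 0 := by rw [← h'other m hmj hmk]; exact hm
          omega
        · obtain ⟨e1, e2⟩ := hσ'ne m hm
          calc h (σ' m) = h' (σ' m) := (h'other _ e1 e2).symm
            _ = -h' m := hneg' m
            _ = -h m := by rw [h'other m hmj hmk]
      · intro m hm0
        have hmj : m ≠ j := by rintro rfl; exact hj hm0
        have hmk : m ≠ k := by rintro rfl; omega
        simp only [Equiv.trans_apply, Equiv.swap_apply_of_ne_of_ne hmj hmk]
        exact hfix' m (by rw [h'other m hmj hmk]; exact hm0)
      · intro m
        by_cases hmj : m = j
        · subst hmj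
          simp only [Equiv.trans_apply, Equiv.swap_apply_left, hσ'k]
          exact hDpk
        by_cases hmk : m = k
        · subst hmk
          simp only [Equiv.trans_apply, Equiv.swap_apply_right, hσ'j]
          omega
        simp only [Equiv.trans_apply, Equiv.swap_apply_of_ne_of_ne hmj hmk]
        by_cases hm : h' m = 0
        · rw [hfix' m hm]
          have : h m = 0 := by rw [← h'other m hmj hmk]; exact hm
          omega
        · obtain ⟨e1, e2⟩ := hσ'ne m hm
          have hmside := hmoves m hm
          have hside2 : σ' m < j ∨ k < σ' m := hmoves (σ' m) (by rw [hneg' m]; omega)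
          have q1 : Dp h' (σ' m) = Dp h (σ' m) := hDpout _ hside2
          have q2 : Dp h' m = Dp h m := hDpout m hmside
          have q3 : Dp h' (σ' m) = Dp h' m + h' m := hDp' m
          have q4 : h' m = h m := h'other m hmj hmk
          omega

/-- The wedge coefficient `c_m = Σ_{j<m}(a_j-g_j) - Σ_{j>m}(a_j-g_j)`. -/
def cfun {N : ℕ} (a g : Fin N → ℤ) (m : Fin N) : ℤ :=
  (∑ j ∈ Finset.Iio m, (a j - g j)) - (∑ j ∈ Finset.Ioi m, (a j - g j))

lemma sum_Iio_comm {N : ℕ} (f : Fin N → Fin N → ℤ) :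
    ∑ k, ∑ j ∈ Finset.Iio k, f j k = ∑ j, ∑ k ∈ Finset.Ioi j, f j k :=
  Finset.sum_comm' (fun x y => by
    simp only [Finset.mem_univ, Finset.mem_Iio, Finset.mem_Ioi, true_and, and_true])

lemma wedge_structure {N : ℕ} (a b g : Fin N → ℤ) :
    wedge a b + wedge b g = ∑ k, b k * cfun a g k := by
  have h1 : wedge a b = (∑ k, (∑ j ∈ Finset.Iio k, a j) * b k)
      - ∑ j, (∑ k ∈ Finset.Ioi j, a k) * b j := by
    unfold wedge
    calc ∑ k : Fin N, ∑ j ∈ Finset.Iio k, (a j * b k - a k * b j)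
        = (∑ k : Fin N, ∑ j ∈ Finset.Iio k, a j * b k)
            - ∑ k : Fin N, ∑ j ∈ Finset.Iio k, a k * b j := by
          simp [Finset.sum_sub_distrib]
      _ = (∑ k, (∑ j ∈ Finset.Iio k, a j) * b k) - ∑ j, (∑ k ∈ Finset.Ioi j, a k) * b j := by
          rw [sum_Iio_comm (fun j k => a k * b j)]
          congr 1
          · exact Finset.sum_congr rfl fun k _ => (Finset.sum_mul ..).symm
          · exact Finset.sum_congr rfl fun j _ => (Finset.sum_mul ..).symm
  have h2 : wedge b g = (∑ j, b j * ∑ k ∈ Finset.Ioi j, g k)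
      - ∑ k, b k * ∑ j ∈ Finset.Iio k, g j := by
    unfold wedge
    calc ∑ k : Fin N, ∑ j ∈ Finset.Iio k, (b j * g k - b k * g j)
        = (∑ k : Fin N, ∑ j ∈ Finset.Iio k, b j * g k)
            - ∑ k : Fin N, ∑ j ∈ Finset.Iio k, b k * g j := by
          simp [Finset.sum_sub_distrib]
      _ = (∑ j, b j * ∑ k ∈ Finset.Ioi j, g k) - ∑ k, b k * ∑ j ∈ Finset.Iio k, g j := by
          rw [sum_Iio_comm (fun j k => b j * g k)]
          congr 1
          · exact Finset.sum_congr rfl fun j _ => (Finset.mul_sum ..).symm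
          · exact Finset.sum_congr rfl fun k _ => (Finset.mul_sum ..).symm
  rw [h1, h2, ← Finset.sum_sub_distrib, ← Finset.sum_sub_distrib, ← Finset.sum_add_distrib]
  apply Finset.sum_congr rfl
  intro k _
  unfold cfun
  simp only [Finset.sum_sub_distrib]
  ring

lemma sum_split {N : ℕ} (h : Fin N → ℤ) (m : Fin N) :
    (∑ j ∈ Finset.Iio m, h j) + h m + (∑ j ∈ Finset.Ioi m, h j) = ∑ j, h j := by
  have hu : Finset.univ \ {m} = Finset.Iio m ∪ Finset.Ioi m := by
    ext i
    simp only [Finset.mem_sdiff, Finset.mem_univ, true_and, Finset.mem_singleton,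
      Finset.mem_union, Finset.mem_Iio, Finset.mem_Ioi]
    exact ne_iff_lt_or_gt
  have hdisj : Disjoint (Finset.Iio m) (Finset.Ioi m) := by
    rw [Finset.disjoint_left]
    intro i h1 h2
    simp only [Finset.mem_Iio] at h1
    simp only [Finset.mem_Ioi] at h2
    exact absurd (h1.trans h2) (lt_irrefl i)
  have e := Finset.sum_eq_sum_sdiff_singleton_add (Finset.mem_univ m) h
  rw [hu, Finset.sum_union hdisj] at e
  omega

end QbaxAux

/-- `Q(v)` and `Q(v')` commute on each fixed charge block. -/
theorem Qbax_block_commute (N : ℕ) (η v v' : ℂ) (n : ℤ)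
    (α γ : Fin N → Bool) (hα : α ∈ blockF N n) (hγ : γ ∈ blockF N n) :
    ∑ β ∈ blockF N n, Qbax η v α β * Qbax η v' β γ
      = ∑ β ∈ blockF N n, Qbax η v' α β * Qbax η v β γ := by
  classical
  simp only [blockF, Finset.mem_filter, Finset.mem_univ, true_and] at hα hγ
  set h : Fin N → ℤ := fun m => (if α m then 1 else 0) - (if γ m then 1 else 0) with hh
  have hdef : ∀ m, h m = (if α m then 1 else 0) - (if γ m then 1 else 0) := fun m => rfl
  have hval : ∀ m, h m = 0 ∨ h m = 1 ∨ h m = -1 := by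
    intro m; rw [hdef m]; cases α m <;> cases γ m <;> simp
  have h2 : ∀ m, toSgn α m - toSgn γ m = 2 * h m := by
    intro m; rw [hdef m]; unfold toSgn; cases α m <;> cases γ m <;> norm_num
  have hsum : ∑ m, h m = 0 := by
    have hag : ∑ m, (toSgn α m - toSgn γ m) = 0 := by
      rw [Finset.sum_sub_distrib, hα, hγ]; ring
    have h2s : ∑ m, (toSgn α m - toSgn γ m) = 2 * ∑ m, h m := by
      rw [Finset.mul_sum]
      exact Finset.sum_congr rfl fun m _ => h2 m
    omega
  obtain ⟨σ, hinv, hneg, hfix, hDp⟩ := QbaxAux.sigma_exists N h hval hsum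
    (le_trans (Finset.card_filter_le _ _) (by simp))
  have key : ∀ m, α (σ m) = γ m ∧ γ (σ m) = α m := by
    intro m
    have e := hneg m
    rw [hdef m, hdef (σ m)] at e
    by_cases h0 : α m = γ m
    · have hm0 : h m = 0 := by rw [hdef m, h0]; ring
      rw [hfix m hm0, h0]
      exact ⟨rfl, rfl⟩
    · cases hm1 : α m <;> cases hm2 : γ m <;> cases hm3 : α (σ m) <;> cases hm4 : γ (σ m) <;>
        simp_all
  have ta : ∀ m, toSgn α (σ m) = toSgn γ m := by
    intro m; unfold toSgn; rw [(key m).1]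
  have tg : ∀ m, toSgn γ (σ m) = toSgn α m := by
    intro m; unfold toSgn; rw [(key m).2]
  have hcDp : ∀ m, QbaxAux.cfun (toSgn α) (toSgn γ) m = 2 * (2 * QbaxAux.Dp h m + h m) := by
    intro m
    have s1 : ∑ j ∈ Finset.Iio m, (toSgn α j - toSgn γ j) = 2 * QbaxAux.Dp h m := by
      unfold QbaxAux.Dp
      rw [Finset.mul_sum]
      exact Finset.sum_congr rfl fun j _ => h2 j
    have s2 : ∑ j ∈ Finset.Ioi m, (toSgn α j - toSgn γ j) = 2 * ∑ j ∈ Finset.Ioi m, h j := by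
      rw [Finset.mul_sum]
      exact Finset.sum_congr rfl fun j _ => h2 j
    have s3 := QbaxAux.sum_split h m
    rw [hsum] at s3
    have s4 : QbaxAux.Dp h m = ∑ j ∈ Finset.Iio m, h j := rfl
    unfold QbaxAux.cfun
    rw [s1, s2]
    omega
  have hc : ∀ m, QbaxAux.cfun (toSgn α) (toSgn γ) (σ m) = QbaxAux.cfun (toSgn α) (toSgn γ) m := by
    intro m; rw [hcDp, hcDp, hDp m, hneg m]; ring
  refine Finset.sum_nbij' (fun β => β ∘ σ) (fun β => β ∘ σ) ?_ ?_ ?_ ?_ ?_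
  · intro β hβ
    simp only [blockF, Finset.mem_filter, Finset.mem_univ, true_and] at hβ ⊢
    rw [← hβ]
    exact Equiv.sum_comp σ (toSgn β)
  · intro β hβ
    simp only [blockF, Finset.mem_filter, Finset.mem_univ, true_and] at hβ ⊢
    rw [← hβ]
    exact Equiv.sum_comp σ (toSgn β)
  · intro β _
    funext m
    show β (σ (σ m)) = β m
    rw [hinv m]
  · intro β _
    funext m
    show β (σ (σ m)) = β m
    rw [hinv m]
  · intro β hβ
    have hb' : toSgn (β ∘ σ) = (toSgn β) ∘ σ := rfl
    have f1 : dotp (toSgn α) (toSgn (β ∘ σ)) = dotp (toSgn β) (toSgn γ) := by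
      unfold dotp
      rw [hb']
      have e := Equiv.sum_comp σ (fun i => toSgn α i * toSgn β (σ i))
      rw [show (∑ i, toSgn α i * (toSgn β ∘ σ) i) = ∑ i, toSgn α i * toSgn β (σ i) from rfl, ← e]
      apply Finset.sum_congr rfl
      intro i _
      rw [ta i, hinv i]
      ring
    have f2 : dotp (toSgn (β ∘ σ)) (toSgn γ) = dotp (toSgn α) (toSgn β) := by
      unfold dotp
      rw [hb']
      have e := Equiv.sum_comp σ (fun i => toSgn β (σ i) * toSgn γ i)
      rw [show (∑ i, (toSgn β ∘ σ) i * toSgn γ i) = ∑ i, toSgn β (σ i) * toSgn γ i from rfl, ← e]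
      apply Finset.sum_congr rfl
      intro i _
      rw [tg i, hinv i]
      ring
    have f3 : wedge (toSgn α) (toSgn (β ∘ σ)) + wedge (toSgn (β ∘ σ)) (toSgn γ)
        = wedge (toSgn α) (toSgn β) + wedge (toSgn β) (toSgn γ) := by
      rw [QbaxAux.wedge_structure, QbaxAux.wedge_structure]
      have e := Equiv.sum_comp σ
        (fun k => toSgn (β ∘ σ) k * QbaxAux.cfun (toSgn α) (toSgn γ) k)
      rw [← e]
      apply Finset.sum_congr rfl
      intro i _
      show toSgn β (σ (σ i)) * QbaxAux.cfun (toSgn α) (toSgn γ) (σ i)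
          = toSgn β i * QbaxAux.cfun (toSgn α) (toSgn γ) i
      rw [hinv i, hc i]
    unfold Qbax
    rw [← Complex.exp_add, ← Complex.exp_add]
    congr 1
    have c1 : ((dotp (toSgn α) (toSgn (β ∘ σ)) : ℤ) : ℂ)
        = ((dotp (toSgn β) (toSgn γ) : ℤ) : ℂ) := by exact_mod_cast f1
    have c2 : ((dotp (toSgn (β ∘ σ)) (toSgn γ) : ℤ) : ℂ)
        = ((dotp (toSgn α) (toSgn β) : ℤ) : ℂ) := by exact_mod_cast f2
    have c3 : ((wedge (toSgn α) (toSgn (β ∘ σ)) : ℤ) : ℂ)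
          + ((wedge (toSgn (β ∘ σ)) (toSgn γ) : ℤ) : ℂ)
        = ((wedge (toSgn α) (toSgn β) : ℤ) : ℂ) + ((wedge (toSgn β) (toSgn γ) : ℤ) : ℂ) := by
      exact_mod_cast f3
    rw [c1, c2]
    linear_combination (-(Complex.I * η / 2)) * c3
end

section
/- Fix N ∈ ℕ, q, z, w, s₀, ρ̃ ∈ ℂ nonzero with q² ≠ 1, and define w(j', α; j, β) = (z/w)^{(1−αβ)/4} · s₀^{−(α+β)/4} · ρ̃ · q^{jβ} for α, β ∈ {−1,+1} and j' = j + (α−β)/2. Then for sequences α, β ∈ {−1,+1}^N with Σα_i = Σβ_i = n, the product over one cyclic path, Π_{k=1}^{N} w(j_k, α_k; j_{k-1}, β_k) with j_k = j + ½Σ_{i<k}(α_i − β_i) and j_0 = j_N = j (consistency from Σα = Σβ), equals s₀^{−n/2} · q^{nj} · (zq/w)^{N/4} · ρ̃^N · q^{(1/4)Σ_{i<k}(β_kα_i − α_kβ_i)} · (w/(zq))^{(1/4)Σ_i α_iβ_i}. -/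
/-!
Write `q = q4⁴` and `√(z/w) = f4² / q4²`. Since `α_k, β_k = ±1` and `S_k = ∑_{i<k} (α_i - β_i)` is
even, the `k`-th factor is the monomial
`f4 ^ (1 - α_k β_k) * q4 ^ (α_k β_k - 1 + 2 β_k S_k + 4 j β_k) * sqs0 ^ (-(α_k + β_k)/2) * ρ`,
so the product is computed by adding exponents. The only nontrivial sum is that of the `q4`
exponents; it follows from `∑_{i<k} (x_k y_i + y_k x_i) = (∑ x)(∑ y) - ∑ x_k y_k`, applied to
`(α, β)` and to `(β, β)`, together with `β_k² = 1` and `∑ α = ∑ β`.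
-/

open Finset

section PairSums

variable {ι R : Type*} [Fintype ι] [LinearOrder ι]
  [LocallyFiniteOrderBot ι] [LocallyFiniteOrderTop ι] [CommRing R]

lemma sum_univ_eq_sum_Iio_add_add_sum_Ioi (f : ι → R) (k : ι) :
    ∑ i, f i = ∑ i ∈ Iio k, f i + f k + ∑ i ∈ Ioi k, f i := by
  rw [← sum_filter_add_sum_filter_not univ (· < k), filter_gt_eq_Iio, add_assoc,
    ← sum_cons (s := Ioi k) notMem_Ioi_self, ← Ici_eq_cons_Ioi, ← filter_le_eq_Ici]
  simp only [not_lt]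

lemma sum_sum_Iio_mul_add_mul (f g : ι → R) :
    ∑ k, ∑ i ∈ Iio k, (f k * g i + g k * f i)
      = (∑ k, f k) * (∑ k, g k) - ∑ k, f k * g k := by
  have hswap : ∑ k, ∑ i ∈ Iio k, g k * f i = ∑ k, ∑ i ∈ Ioi k, f k * g i := by
    rw [sum_comm' (t' := univ) (s' := Ioi) (by simp)]
    simp only [mul_comm]
  rw [sum_mul_sum, eq_sub_iff_add_eq, sum_congr rfl fun k _ =>
    sum_univ_eq_sum_Iio_add_add_sum_Ioi (fun i => f k * g i) k]
  simp only [sum_add_distrib, hswap]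
  ring

lemma sum_sum_Iio_mul_sub_mul_of_mul_self_eq_one (α β : ι → R) (hβ : ∀ k, β k * β k = 1)
    (hsum : ∑ k, α k = ∑ k, β k) :
    ∑ k, ∑ i ∈ Iio k, (β k * α i - α k * β i)
      = ∑ k, (α k * β k - 1) + 2 * ∑ k, β k * ∑ i ∈ Iio k, (α i - β i) := by
  have hαβ := sum_sum_Iio_mul_add_mul α β
  have hββ := sum_sum_Iio_mul_add_mul β β
  simp only [sum_add_distrib, sum_sub_distrib, ← mul_sum, mul_sub, hβ] at hαβ hββ ⊢
  linear_combination hββ - hαβ - (∑ k, β k) * hsum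

end PairSums

lemma prod_zpow_eq_zpow_sum₀ {ι G : Type*} [CommGroupWithZero G] {a : G} (ha : a ≠ 0)
    (s : Finset ι) (f : ι → ℤ) : ∏ i ∈ s, a ^ f i = a ^ ∑ i ∈ s, f i := by
  induction s using Finset.cons_induction with
  | empty => simp
  | cons i s _ ih => rw [prod_cons, sum_cons, zpow_add₀ ha, ih]

lemma sum_ediv_two_of_even {ι : Type*} (s : Finset ι) {f : ι → ℤ} (hf : ∀ i ∈ s, Even (f i)) :
    ∑ i ∈ s, f i / 2 = (∑ i ∈ s, f i) / 2 := by
  rw [← sum_congr rfl fun i hi => Int.two_mul_ediv_two_of_even (hf i hi), ← mul_sum,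
    Int.mul_ediv_cancel_left _ two_ne_zero]

lemma odd_of_eq_one_or_eq_neg_one {a : ℤ} (h : a = 1 ∨ a = -1) : Odd a := by
  rcases h with rfl | rfl <;> decide

lemma weight_eq_zpow_mul_zpow {G : Type*} [CommGroupWithZero G] {u v : G} (hv : v ≠ 0)
    (r ρ : G) {a b S : ℤ} (j e : ℤ) (hab : Even (1 - a * b)) (hS : Even S) :
    (u ^ 2 / v ^ 2) ^ ((1 - a * b) / 2) * r ^ e * ρ * (v ^ 4) ^ ((j + S / 2) * b)
      = u ^ (1 - a * b) * v ^ (a * b - 1 + 2 * (b * S) + 4 * j * b) * r ^ e * ρ := by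
  have hsq : (u ^ 2 / v ^ 2) ^ ((1 - a * b) / 2) = u ^ (1 - a * b) * v ^ (a * b - 1) := by
    rw [div_zpow, ← zpow_natCast, ← zpow_natCast, ← zpow_mul, ← zpow_mul, div_eq_mul_inv,
      ← zpow_neg, Nat.cast_ofNat, Int.two_mul_ediv_two_of_even hab, neg_sub]
  have hfourth : (v ^ 4) ^ ((j + S / 2) * b) = v ^ (2 * (b * S) + 4 * j * b) := by
    rw [← zpow_natCast, ← zpow_mul]
    congr 1
    push_cast
    linear_combination (2 * b) * Int.two_mul_ediv_two_of_even hS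
  rw [hsq, hfourth]
  simp only [zpow_add₀ hv]
  ac_rfl

theorem Q_matrix_explicit_product_general (N : ℕ) (n j : ℤ)
    (q z w s0 ρ sqzw sqs0 f4 q4 : ℂ)
    (hq : q ≠ 0) (hz : z ≠ 0) (hw : w ≠ 0)
    (hs0 : s0 ≠ 0)
    (hq4 : q4 ^ 4 = q) (hf4 : f4 ^ 4 = z * q / w)
    (hsqs0 : sqs0 ^ 2 = s0) (hsqzw : sqzw = f4 ^ 2 / q4 ^ 2)
    (α β : Fin N → ℤ)
    (hα : ∀ i, α i = 1 ∨ α i = -1) (hβ : ∀ i, β i = 1 ∨ β i = -1)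
    (hαs : ∑ i, α i = n) (hβs : ∑ i, β i = n) :
    ∏ k : Fin N,
        (sqzw ^ ((1 - α k * β k) / 2) * sqs0 ^ (-((α k + β k) / 2)) * ρ *
          q ^ ((j + (∑ i ∈ Finset.Iio k, (α i - β i)) / 2) * β k))
      = sqs0 ^ (-n) * q ^ (n * j) * f4 ^ (N : ℤ) * ρ ^ (N : ℤ) *
          q4 ^ (∑ k : Fin N, ∑ i ∈ Finset.Iio k, (β k * α i - α k * β i)) *
          f4 ^ (-(∑ i : Fin N, α i * β i)) := by
  subst hq4 hsqzw hsqs0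
  have hq4₀ : q4 ≠ 0 := by rintro rfl; simp at hq
  have hf4₀ : f4 ≠ 0 := by
    rintro rfl
    exact div_ne_zero (mul_ne_zero hz hq) hw (by rw [← hf4]; ring)
  have hsqs0₀ : sqs0 ≠ 0 := by rintro rfl; simp at hs0
  have hαodd i := odd_of_eq_one_or_eq_neg_one (hα i)
  have hβodd i := odd_of_eq_one_or_eq_neg_one (hβ i)
  have hs0exp : ∑ k, -((α k + β k) / 2) = -n := by
    rw [sum_neg_distrib, sum_ediv_two_of_even _ fun k _ => (hαodd k).add_odd (hβodd k),
      sum_add_distrib, hαs, hβs]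
    omega
  have hq4exp : ∑ k : Fin N, (α k * β k - 1 + 2 * (β k * ∑ i ∈ Iio k, (α i - β i)) + 4 * j * β k)
      = ∑ k : Fin N, ∑ i ∈ Iio k, (β k * α i - α k * β i) + 4 * (n * j) := by
    rw [sum_sum_Iio_mul_sub_mul_of_mul_self_eq_one α β
      (fun k => Int.isUnit_mul_self (Int.isUnit_iff.mpr (hβ k))) (hαs.trans hβs.symm),
      sum_add_distrib, sum_add_distrib, ← mul_sum, ← mul_sum, hβs]
    ring
  have hf4exp : ∑ k : Fin N, (1 - α k * β k) = N - ∑ k, α k * β k := by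
    simp only [sum_sub_distrib, sum_const, card_univ, Fintype.card_fin, nsmul_one]
  rw [prod_congr rfl fun k _ => weight_eq_zpow_mul_zpow hq4₀ sqs0 ρ j _
      (odd_one.sub_odd ((hαodd k).mul (hβodd k)))
      (even_sum _ fun i _ => (hαodd i).sub_odd (hβodd i)),
    prod_mul_distrib, prod_mul_distrib, prod_mul_distrib, prod_zpow_eq_zpow_sum₀ hf4₀,
    prod_zpow_eq_zpow_sum₀ hq4₀, prod_zpow_eq_zpow_sum₀ hsqs0₀, prod_const, card_univ,
    Fintype.card_fin, hf4exp, hq4exp, hs0exp]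
  rw [← zpow_natCast q4 4, ← zpow_mul, zpow_sub₀ hf4₀, zpow_add₀ hq4₀]
  simp only [zpow_neg, zpow_natCast, Nat.cast_ofNat]
  ring

/-- the explicit product formula for one cyclic path of
`W`-matrix elements (s₁ = s₂ = 0) of the 6-vertex Q-operator, eq. (5.7) of
the paper, for a single fixed summand `j` of the trace. Branches of the
fractional powers are fixed by `q4⁴ = q`, `f4⁴ = zq/w`, `sqs0² = s₀`,
`sqzw = f4²/q4²` (a square root of `z/w`). -/
theorem Q_matrix_explicit_product (N : ℕ) (n j : ℤ)
    (q z w s0 ρ sqzw sqs0 f4 q4 : ℂ)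
    (hq : q ≠ 0) (hq2 : q ^ 2 ≠ 1) (hz : z ≠ 0) (hw : w ≠ 0)
    (hs0 : s0 ≠ 0) (hρ : ρ ≠ 0)
    (hq4 : q4 ^ 4 = q) (hf4 : f4 ^ 4 = z * q / w)
    (hsqs0 : sqs0 ^ 2 = s0) (hsqzw : sqzw = f4 ^ 2 / q4 ^ 2)
    (α β : Fin N → ℤ)
    (hα : ∀ i, α i = 1 ∨ α i = -1) (hβ : ∀ i, β i = 1 ∨ β i = -1)
    (hαs : ∑ i, α i = n) (hβs : ∑ i, β i = n) :
    ∏ k : Fin N,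
        (sqzw ^ ((1 - α k * β k) / 2) * sqs0 ^ (-((α k + β k) / 2)) * ρ *
          q ^ ((j + (∑ i ∈ Finset.Iio k, (α i - β i)) / 2) * β k))
      = sqs0 ^ (-n) * q ^ (n * j) * f4 ^ (N : ℤ) * ρ ^ (N : ℤ) *
          q4 ^ (∑ k : Fin N, ∑ i ∈ Finset.Iio k, (β k * α i - α k * β i)) *
          f4 ^ (-(∑ i : Fin N, α i * β i)) :=
  Q_matrix_explicit_product_general N n j q z w s0 ρ sqzw sqs0 f4 q4 hq hz hw hs0 hq4 hf4 hsqs0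
    hsqzw α β hα hβ hαs hβs
end
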